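/- arXiv:cs/0608103 — 4 statements merged into one kernel-verified Lean document; each statement's English description precedes it below -/
import Mathlib

section
/- Let P be a Horn ℱ-program (monotone constraints, no negation in bodies) and let t = (Xₙ)ₙ₌₀,₁,… be a P-computation, i.e., X₀ = ∅, Xₙ ⊆ Xₙ₊₁, and Xₙ₊₁ ∈ T^nd_P(Xₙ) for all n. Then the result R_t = ⋃ₙ Xₙ is a supported model of P, i.e., R_t is a model of P and R_t ⊆ hset(P(R_t)). -/
/-- An abstract-constraint clause: head constraint `hdC` over head set `hset`,
positive body literals `pos` and negated body literals `neg`, each a pair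
(constraint, atom set). -/
structure ACClause (At : Type*) where
  hdC : Set (Set At)
  hset : Set At
  pos : List (Set (Set At) × Set At)
  neg : List (Set (Set At) × Set At)

/-- M ⊨ C(X) iff M ∩ X ∈ C. -/
def satAtom {At : Type*} (M : Set At) (A : Set (Set At) × Set At) : Prop :=
  M ∩ A.2 ∈ A.1

def satBody {At : Type*} (M : Set At) (r : ACClause At) : Prop :=
  (∀ A ∈ r.pos, satAtom M A) ∧ (∀ A ∈ r.neg, ¬ satAtom M A)

def satHead {At : Type*} (M : Set At) (r : ACClause At) : Prop :=
  M ∩ r.hset ∈ r.hdC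

/-- A constraint is monotone (upward closed). -/
def MonoC {At : Type*} (C : Set (Set At)) : Prop :=
  ∀ A A' : Set At, A ∈ C → A ⊆ A' → A' ∈ C

def MonoClause {At : Type*} (r : ACClause At) : Prop :=
  MonoC r.hdC ∧ (∀ A ∈ r.pos, MonoC A.1) ∧ (∀ A ∈ r.neg, MonoC A.1)

/-- All atom sets of a clause are finite. -/
def FinClause {At : Type*} (r : ACClause At) : Prop :=
  r.hset.Finite ∧ (∀ A ∈ r.pos, A.2.Finite) ∧ (∀ A ∈ r.neg, A.2.Finite)

/-- The head constraint atom of `r` is consistent. -/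
def ConsHead {At : Type*} (r : ACClause At) : Prop :=
  ∃ M : Set At, satHead M r

def Models {At : Type*} (M : Set At) (P : Set (ACClause At)) : Prop :=
  ∀ r ∈ P, satBody M r → satHead M r

/-- The M-applicable clauses P(M). -/
def appl {At : Type*} (P : Set (ACClause At)) (M : Set At) : Set (ACClause At) :=
  {r ∈ P | satBody M r}

/-- hset(P(M)): union of head sets of M-applicable clauses. -/
def hsetP {At : Type*} (P : Set (ACClause At)) (M : Set At) : Set At :=
  ⋃ r ∈ appl P M, r.hset

/-- The nondeterministic one-step provability operator. -/
def Tnd {At : Type*} (P : Set (ACClause At)) (M : Set At) : Set (Set At) :=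
  {M' | M' ⊆ hsetP P M ∧ ∀ r ∈ appl P M, satHead M' r}

/-- A monotone ℱ-program: all constraints monotone, all atom sets finite. -/
def MonoProg {At : Type*} (P : Set (ACClause At)) : Prop :=
  ∀ r ∈ P, MonoClause r ∧ FinClause r

/-- A Horn ℱ-program: monotone, finite atom sets, no negation. -/
def Horn {At : Type*} (P : Set (ACClause At)) : Prop :=
  ∀ r ∈ P, r.neg = [] ∧ MonoClause r ∧ FinClause r

/-- A P-computation. -/
def IsComputation {At : Type*} (P : Set (ACClause At)) (t : ℕ → Set At) : Prop :=
  t 0 = ∅ ∧ ∀ n, t n ⊆ t (n + 1) ∧ t (n + 1) ∈ Tnd P (t n)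

/-- M is a derivable model of P: the result of some P-computation. -/
def Derivable {At : Type*} (P : Set (ACClause At)) (M : Set At) : Prop :=
  ∃ t, IsComputation P t ∧ M = ⋃ n, t n

def stripNeg {At : Type*} (r : ACClause At) : ACClause At :=
  { r with neg := [] }

/-- The reduct P^M. -/
def reduct {At : Type*} (P : Set (ACClause At)) (M : Set At) : Set (ACClause At) :=
  {r' | ∃ r ∈ P, (∀ A ∈ r.neg, ¬ satAtom M A) ∧ r' = stripNeg r}

/-- M is a stable model of P: M is a derivable model of the reduct P^M. -/
def Stable {At : Type*} (P : Set (ACClause At)) (M : Set At) : Prop :=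
  Derivable (reduct P M) M

/-- The canonical P-computation with respect to M. -/
def canon {At : Type*} (P : Set (ACClause At)) (M : Set At) : ℕ → Set At
  | 0 => ∅
  | n + 1 => hsetP P (canon P M n) ∩ M

/-- A definite head: the head set is a minimal element of the head constraint. -/
def DefHead {At : Type*} (r : ACClause At) : Prop :=
  r.hset ∈ r.hdC ∧ ∀ Y ∈ r.hdC, Y ⊆ r.hset → Y = r.hset

theorem stmt5 {At : Type*} (P : Set (ACClause At)) (hP : Horn P)
    (t : ℕ → Set At) (ht : IsComputation P t) :
    Models (⋃ n, t n) P ∧ (⋃ n, t n) ⊆ hsetP P (⋃ n, t n) := by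
  obtain ⟨h0, hstep⟩ := ht
  set R := ⋃ n, t n with hR
  have hmono : Monotone t := monotone_nat_of_le_succ fun n => (hstep n).1
  have htR : ∀ n, t n ⊆ R := fun n => Set.subset_iUnion t n
  -- a finite subset of R is contained in some t N
  have hfin : ∀ S : Set At, S.Finite → S ⊆ R → ∃ N, S ⊆ t N := by
    intro S hS
    refine Set.Finite.induction_on (motive := fun S _ => S ⊆ R → ∃ N, S ⊆ t N) S hS ?_ ?_
    · intro _; exact ⟨0, by simp⟩
    · intro a s _ _ ih hsub
      obtain ⟨N, hN⟩ := ih (Set.Subset.trans (Set.subset_insert a s) hsub)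
      obtain ⟨_, ⟨m, rfl⟩, ham⟩ := hsub (Set.mem_insert a s)
      exact ⟨max m N, Set.insert_subset (hmono (le_max_left m N) ham)
        (hN.trans (hmono (le_max_right m N)))⟩
  -- if t n satisfies a body, so does R (monotone pos atoms, no neg)
  have hbodyR : ∀ r ∈ P, ∀ n, satBody (t n) r → satBody R r := by
    intro r hr n hb
    obtain ⟨hneg, ⟨_, hposM, _⟩, _⟩ := hP r hr
    refine ⟨fun A hA => ?_, fun A hA => by simp [hneg] at hA⟩
    exact hposM A hA _ _ (hb.1 A hA) (Set.inter_subset_inter_left _ (htR n))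
  constructor
  · -- Models
    intro r hr hb
    obtain ⟨hneg, ⟨hhdM, _, _⟩, hhf, hpf, _⟩ := hP r hr
    -- find a stage N where the body is satisfied
    have hstage : ∀ A ∈ r.pos, ∃ N, satAtom (t N) A := by
      intro A hA
      have hsat := hb.1 A hA
      obtain ⟨N, hN⟩ := hfin (R ∩ A.2) ((hpf A hA).inter_of_right _)
        Set.inter_subset_left
      refine ⟨N, ?_⟩
      have : R ∩ A.2 = t N ∩ A.2 := Set.Subset.antisymm
        (Set.subset_inter hN Set.inter_subset_right)
        (Set.inter_subset_inter_left _ (htR N))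
      unfold satAtom; rwa [← this]
    -- take the max over the finite list of pos atoms
    obtain ⟨_, ⟨_, hposM, _⟩, _⟩ := hP r hr
    have hlist : ∀ l : List (Set (Set At) × Set At), (∀ A ∈ l, MonoC A.1) →
        (∀ A ∈ l, ∃ N, satAtom (t N) A) → ∃ N, ∀ A ∈ l, satAtom (t N) A := by
      intro l
      induction l with
      | nil => exact fun _ _ => ⟨0, by simp⟩
      | cons A l ih =>
        intro hM hs
        obtain ⟨N1, hN1⟩ := ih (fun B hB => hM B (List.mem_cons_of_mem A hB))
          (fun B hB => hs B (List.mem_cons_of_mem A hB))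
        obtain ⟨N2, hN2⟩ := hs A List.mem_cons_self
        refine ⟨max N1 N2, fun B hB => ?_⟩
        rcases List.mem_cons.1 hB with rfl | hB
        · exact hM B List.mem_cons_self _ _ hN2
            (Set.inter_subset_inter_left _ (hmono (le_max_right N1 N2)))
        · exact hM B (List.mem_cons_of_mem A hB) _ _ (hN1 B hB)
            (Set.inter_subset_inter_left _ (hmono (le_max_left N1 N2)))
    obtain ⟨N, hN⟩ := hlist r.pos hposM hstage
    have happl : r ∈ appl P (t N) :=
      ⟨hr, hN, fun A hA => by simp [hneg] at hA⟩
    have hhead : satHead (t (N + 1)) r := (hstep N).2.2 r happl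
    exact hhdM _ _ hhead (Set.inter_subset_inter_left _ (htR (N + 1)))
  · -- supported
    intro x hx
    obtain ⟨_, ⟨n, rfl⟩, hxn⟩ := hx
    induction n with
    | zero => simp [h0] at hxn
    | succ m ih =>
      have hsub := (hstep m).2.1
      obtain ⟨_, ⟨r, rfl⟩, hmem⟩ := hsub hxn
      simp only [Set.mem_iUnion] at hmem
      obtain ⟨⟨hrP, hrb⟩, hxr⟩ := hmem
      exact Set.mem_biUnion (show r ∈ appl P R from ⟨hrP, hbodyR r hrP m hrb⟩) hxr
end

section
/- Let P be a Horn ℱ-program and M a model of P. Define the canonical computation X₀ = ∅ and Xₙ₊₁ = hset(P(Xₙ)) ∩ M. Then this sequence is a P-computation: Xₙ ⊆ Xₙ₊₁ and Xₙ₊₁ ∈ T^nd_P(Xₙ) for all n ≥ 0. -/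
/-!
Without negation, applicability of a clause is upward closed in the interpretation, so
`hset(P(X))` grows with `X` and the canonical sequence increases by induction. Each `Xₙ₊₁` is
one-step provable from `Xₙ`: an `Xₙ`-applicable clause is also `M`-applicable since `Xₙ ⊆ M`,
so `M` satisfies its head, and the atoms of that head lying in `M` all belong to `Xₙ₊₁`.
-/

section

variable {At : Type*}

lemma satBody_mono {r : ACClause At} (hneg : r.neg = []) (hpos : ∀ A ∈ r.pos, MonoC A.1)
    {X Y : Set At} (hXY : X ⊆ Y) (h : satBody X r) : satBody Y r := by
  refine ⟨fun A hA => ?_, fun A hA => by simp [hneg] at hA⟩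
  exact hpos A hA _ _ (h.1 A hA) (Set.inter_subset_inter_left _ hXY)

lemma appl_mono {P : Set (ACClause At)} (hP : Horn P) : Monotone (appl P) := by
  rintro X Y hXY r ⟨hr, hbody⟩
  obtain ⟨hneg, ⟨-, hpos, -⟩, -⟩ := hP r hr
  exact ⟨hr, satBody_mono hneg hpos hXY hbody⟩

lemma hsetP_mono {P : Set (ACClause At)} (hP : Horn P) : Monotone (hsetP P) :=
  fun _ _ hXY => Set.biUnion_subset_biUnion_left (appl_mono hP hXY)

lemma hset_subset_hsetP {P : Set (ACClause At)} {X : Set At} {r : ACClause At}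
    (hr : r ∈ appl P X) : r.hset ⊆ hsetP P X :=
  Set.subset_biUnion_of_mem (u := ACClause.hset) hr

lemma hsetP_inter_mem_Tnd {P : Set (ACClause At)} (hP : Horn P) {M X : Set At}
    (hM : Models M P) (hXM : X ⊆ M) : hsetP P X ∩ M ∈ Tnd P X := by
  refine ⟨Set.inter_subset_left, fun r hr => ?_⟩
  obtain ⟨hneg, ⟨hhd, hpos, -⟩, -⟩ := hP r hr.1
  have hHeadM : satHead M r := hM r hr.1 (satBody_mono hneg hpos hXM hr.2)
  refine hhd _ _ hHeadM fun a ⟨haM, haHead⟩ => ?_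
  exact ⟨⟨hset_subset_hsetP hr haHead, haM⟩, haHead⟩

lemma canon_subset (P : Set (ACClause At)) (M : Set At) : ∀ n, canon P M n ⊆ M
  | 0 => Set.empty_subset M
  | _ + 1 => Set.inter_subset_right

lemma canon_subset_succ {P : Set (ACClause At)} (hP : Horn P) (M : Set At) :
    ∀ n, canon P M n ⊆ canon P M (n + 1)
  | 0 => Set.empty_subset _
  | n + 1 => Set.inter_subset_inter_left M (hsetP_mono hP (canon_subset_succ hP M n))

end

theorem stmt6 {At : Type*} (P : Set (ACClause At)) (hP : Horn P)
    (M : Set At) (hM : Models M P) :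
    IsComputation P (canon P M) :=
  ⟨rfl, fun n => ⟨canon_subset_succ hP M n, hsetP_inter_mem_Tnd hP hM (canon_subset P M n)⟩⟩
end

section
/- A Horn ℱ-program P has a model if and only if it has a P-computation. In particular, every Horn ℱ-program without constraint clauses (all clause heads consistent) possesses at least one P-computation. -/
lemma applMono {At : Type*} {P : Set (ACClause At)} (hP : Horn P)
    {X Y : Set At} (h : X ⊆ Y) : appl P X ⊆ appl P Y := by
  rintro r ⟨hr, hpos, hneg⟩
  obtain ⟨hne, ⟨_, hmp, _⟩, _⟩ := hP r hr
  refine ⟨hr, fun A hA => hmp A hA _ _ (hpos A hA)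
    (Set.inter_subset_inter_left _ h), ?_⟩
  simp [hne]

lemma hsetPMono {At : Type*} {P : Set (ACClause At)} (hP : Horn P)
    {X Y : Set At} (h : X ⊆ Y) : hsetP P X ⊆ hsetP P Y := by
  apply Set.iUnion₂_subset
  intro r hr
  exact Set.subset_biUnion_of_mem (applMono hP h hr)

lemma canonComp {At : Type*} {P : Set (ACClause At)} (hP : Horn P)
    {M : Set At} (hM : Models M P) : IsComputation P (canon P M) := by
  have key : ∀ n, canon P M n ⊆ M ∧ canon P M n ⊆ canon P M (n + 1) := by
    intro n
    induction n with
    | zero => exact ⟨by simp [canon], by simp [canon]⟩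
    | succ n ih =>
      refine ⟨Set.inter_subset_right, ?_⟩
      show _ ⊆ hsetP P (canon P M (n+1)) ∩ M
      exact Set.inter_subset_inter_left _ (hsetPMono hP ih.2)
  refine ⟨rfl, fun n => ⟨(key n).2, ?_, ?_⟩⟩
  · exact Set.inter_subset_left
  · rintro r hr
    have hrM : r ∈ appl P M := applMono hP (key n).1 hr
    have hhd : M ∩ r.hset ∈ r.hdC := hM r hrM.1 hrM.2
    have hsub : r.hset ⊆ hsetP P (canon P M n) :=
      Set.subset_biUnion_of_mem hr
    have : canon P M (n + 1) ∩ r.hset = M ∩ r.hset := by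
      show hsetP P (canon P M n) ∩ M ∩ r.hset = M ∩ r.hset
      apply Set.eq_of_subset_of_subset
      · exact Set.inter_subset_inter_left _ Set.inter_subset_right
      · rintro x ⟨hxM, hxh⟩
        exact ⟨⟨hsub hxh, hxM⟩, hxh⟩
    show canon P M (n + 1) ∩ r.hset ∈ r.hdC
    rw [this]; exact hhd

lemma listBound {α : Type*} (l : List α) (p : α → ℕ → Prop)
    (hm : ∀ a m n, m ≤ n → p a m → p a n)
    (h : ∀ a ∈ l, ∃ N, p a N) : ∃ N, ∀ a ∈ l, p a N := by
  induction l with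
  | nil => exact ⟨0, by simp⟩
  | cons a l ih =>
    obtain ⟨N1, hN1⟩ := h a (by simp)
    obtain ⟨N2, hN2⟩ := ih (fun b hb => h b (by simp [hb]))
    refine ⟨max N1 N2, ?_⟩
    intro b hb
    rcases List.mem_cons.mp hb with rfl | hb
    · exact hm _ _ _ (le_max_left _ _) hN1
    · exact hm _ _ _ (le_max_right _ _) (hN2 b hb)

lemma finBound {At : Type*} {t : ℕ → Set At} (hmono : Monotone t)
    {S : Set At} (hS : S.Finite) (h : S ⊆ ⋃ n, t n) : ∃ N, S ⊆ t N := by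
  refine Set.Finite.induction_on
    (motive := fun s _ => s ⊆ (⋃ n, t n) → ∃ N, s ⊆ t N) S hS
    (fun _ => ⟨0, by simp⟩) ?_ h
  intro a s _ _ ih hins
  obtain ⟨N1, hN1⟩ := ih (fun x hx => hins (Set.mem_insert_of_mem a hx))
  obtain ⟨n0, hn0⟩ := Set.mem_iUnion.mp (hins (Set.mem_insert a s))
  refine ⟨max n0 N1, ?_⟩
  rintro x (rfl | hx)
  · exact hmono (le_max_left _ _) hn0
  · exact hmono (le_max_right _ _) (hN1 hx)

lemma compModel {At : Type*} {P : Set (ACClause At)} (hP : Horn P)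
    {t : ℕ → Set At} (ht : IsComputation P t) : Models (⋃ n, t n) P := by
  have hmono : Monotone t := monotone_nat_of_le_succ (fun n => (ht.2 n).1)
  set M := ⋃ n, t n with hMdef
  intro r hr hbody
  obtain ⟨hne, ⟨hmhd, hmp, _⟩, hfh, hfp, _⟩ := hP r hr
  have hbnd : ∃ N, ∀ A ∈ r.pos, M ∩ A.2 ⊆ t N := by
    apply listBound r.pos (fun A N => M ∩ A.2 ⊆ t N)
      (fun A m n hmn h => h.trans (hmono hmn))
    intro A hA
    exact finBound hmono ((hfp A hA).subset Set.inter_subset_right)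
      Set.inter_subset_left
  obtain ⟨N, hN⟩ := hbnd
  have hrN : r ∈ appl P (t N) := by
    refine ⟨hr, fun A hA => ?_, by simp [hne]⟩
    have : t N ∩ A.2 = M ∩ A.2 := by
      apply Set.eq_of_subset_of_subset
      · exact Set.inter_subset_inter_left _ (Set.subset_iUnion t N)
      · intro x hx
        exact ⟨hN A hA hx, hx.2⟩
    unfold satAtom
    rw [this]
    exact hbody.1 A hA
  have hhd := (ht.2 N).2.2 r hrN
  exact hmhd _ _ hhd (Set.inter_subset_inter_left _
    ((Set.subset_iUnion t (N+1))))

theorem stmt7 {At : Type*} (P : Set (ACClause At)) (hP : Horn P) :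
    ((∃ M : Set At, Models M P) ↔ ∃ t : ℕ → Set At, IsComputation P t) ∧
    ((∀ r ∈ P, ConsHead r) → ∃ t : ℕ → Set At, IsComputation P t) := by
  have fwd : (∃ M : Set At, Models M P) → ∃ t : ℕ → Set At, IsComputation P t := by
    rintro ⟨M, hM⟩
    exact ⟨canon P M, canonComp hP hM⟩
  constructor
  · refine ⟨fwd, ?_⟩
    rintro ⟨t, ht⟩
    exact ⟨_, compModel hP ht⟩
  · intro hcons
    apply fwd
    refine ⟨Set.univ, fun r hr _ => ?_⟩
    obtain ⟨M0, hM0⟩ := hcons r hr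
    have := (hP r hr).2.1.1
    show Set.univ ∩ r.hset ∈ r.hdC
    rw [Set.univ_inter]
    exact this _ _ hM0 Set.inter_subset_right
end

section
/- Every stable model of a monotone ℱ-program P is a supported model of P (hence a model of P). -/
section AuxStmt12
variable {At : Type*}

lemma finset_subset_chain' {t : ℕ → Set At} (hmono : Monotone t)
    (F : Finset At) (hsub : ↑F ⊆ ⋃ n, t n) : ∃ n, ↑F ⊆ t n := by
  classical
  induction F using Finset.induction_on with
  | empty => exact ⟨0, by simp⟩
  | insert a s hnotmem ih =>
    obtain ⟨n, hn⟩ := ih (fun x hx => hsub (by simp at hx ⊢; exact Or.inr hx))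
    obtain ⟨_, ⟨m, rfl⟩, hm⟩ := hsub (by simp : (a : At) ∈ (↑(insert a s) : Set At))
    refine ⟨max n m, fun x hx => ?_⟩
    simp at hx
    rcases hx with rfl | hx
    · exact hmono (le_max_right n m) hm
    · exact hmono (le_max_left n m) (hn hx)

lemma finite_subset_chain' {t : ℕ → Set At} (hmono : Monotone t)
    {S : Set At} (hS : S.Finite) (hsub : S ⊆ ⋃ n, t n) : ∃ n, S ⊆ t n := by
  obtain ⟨F, rfl⟩ := hS.exists_finset_coe
  exact finset_subset_chain' hmono F hsub

lemma exists_n_all_sat {t : ℕ → Set At} (hmono : Monotone t)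
    (l : List (Set (Set At) × Set At))
    (hmonoC : ∀ A ∈ l, MonoC A.1)
    (h : ∀ A ∈ l, ∃ n, satAtom (t n) A) :
    ∃ n, ∀ A ∈ l, satAtom (t n) A := by
  induction l with
  | nil => exact ⟨0, fun A hA => absurd hA List.not_mem_nil⟩
  | cons a l ih =>
    obtain ⟨n, hn⟩ := ih (fun A hA => hmonoC A (List.mem_cons_of_mem a hA))
      (fun A hA => h A (List.mem_cons_of_mem a hA))
    obtain ⟨m, hm⟩ := h a List.mem_cons_self
    refine ⟨max n m, fun A hA => ?_⟩
    rcases List.mem_cons.1 hA with rfl | hA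
    · exact hmonoC A List.mem_cons_self _ _ hm (Set.inter_subset_inter_left _ (hmono (le_max_right n m)))
    · exact hmonoC A (List.mem_cons_of_mem a hA) _ _ (hn A hA)
        (Set.inter_subset_inter_left _ (hmono (le_max_left n m)))

end AuxStmt12

/-- stable models are supported (hence models). -/
theorem stmt12 {At : Type*} (P : Set (ACClause At)) (hP : MonoProg P)
    (M : Set At) (hM : Stable P M) :
    (Models M P ∧ M ⊆ hsetP P M) ∧ Models M P := by
  obtain ⟨t, ⟨ht0, htstep⟩, hMeq⟩ := hM
  have hmono : Monotone t := monotone_nat_of_le_succ fun n => (htstep n).1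
  have htM : ∀ n, t n ⊆ M := fun n => hMeq ▸ Set.subset_iUnion t n
  have hmodels : Models M P := by
    intro r hrP hbody
    obtain ⟨hm, hf⟩ := hP r hrP
    have hex : ∃ n, ∀ A ∈ r.pos, satAtom (t n) A := by
      apply exists_n_all_sat hmono r.pos hm.2.1
      intro A hA
      have hfin : (M ∩ A.2).Finite := (hf.2.1 A hA).subset Set.inter_subset_right
      obtain ⟨n, hn⟩ := finite_subset_chain' hmono hfin
        (hMeq ▸ Set.inter_subset_left : M ∩ A.2 ⊆ ⋃ n, t n)
      refine ⟨n, hm.2.1 A hA _ _ (hbody.1 A hA) ?_⟩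
      exact Set.subset_inter hn Set.inter_subset_right
    obtain ⟨n, hn⟩ := hex
    have hmem : stripNeg r ∈ appl (reduct P M) (t n) := by
      refine ⟨⟨r, hrP, hbody.2, rfl⟩, ?_, ?_⟩
      · exact fun A hA => hn A hA
      · intro A hA; exact absurd hA List.not_mem_nil
    have hhead : satHead (t (n + 1)) (stripNeg r) := (htstep n).2.2 _ hmem
    exact hm.1 _ _ hhead (Set.inter_subset_inter_left _ (htM (n + 1)))
  have hsub : M ⊆ hsetP P M := by
    intro x hx
    rw [hMeq] at hx
    obtain ⟨_, ⟨n, rfl⟩, hx⟩ := hx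
    match n with
    | 0 => simp only [ht0] at hx; exact absurd hx (Set.notMem_empty x)
    | n + 1 =>
      have h1 : t (n + 1) ⊆ hsetP (reduct P M) (t n) := ((htstep n).2).1
      obtain ⟨r', hr', hx'⟩ := Set.mem_iUnion₂.1 (h1 hx)
      obtain ⟨⟨r, hrP, hneg, rfl⟩, hbody⟩ := hr'
      refine Set.mem_iUnion₂.2 ⟨r, ⟨hrP, ?_, hneg⟩, hx'⟩
      intro A hA
      exact (hP r hrP).1.2.1 A hA _ _ (hbody.1 A hA)
        (Set.inter_subset_inter_left _ (htM n))
  exact ⟨⟨hmodels, hsub⟩, hmodels⟩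
end
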